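/- There exists a universal constant C > 0 such that for every μ ∈ {+1,−1}, every j ∈ {1,2,3}, every k ∈ ℤ, every t > 0, every x ∈ ℝ³, every v ∈ ℝ³ with v ≠ 0, every bounded measurable G : ℝ³ → ℂ, and every measurable χ : ℝ → ℝ with |χ| ≤ 1 and χ(r) = 0 for |r| ≥ 2^{12}, the integral K := ∫_{2^{k−2} ≤ |ξ| ≤ 2^{k+2}} e^{ i (x + t v̂)·ξ − i t μ |ξ| } · ( ((e_j×v)·ξ)/|v| ) · G(ξ) · χ( t(|ξ| − μ v̂·ξ) ) dξ satisfies both |K| ≤ C · t^{−1} · 2^{3k} · sup_{2^{k−2} ≤ |ξ| ≤ 2^{k+2}} |G(ξ)| and (1+|v|)^{−1}·|K| ≤ C · t^{−2} · 2^{2k} · sup_{2^{k−2} ≤ |ξ| ≤ 2^{k+2}} |G(ξ)|. -/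

import Mathlib

open MeasureTheory
open scoped RealInnerProductSpace

noncomputable section

abbrev E3 : Type := EuclideanSpace ℝ (Fin 3)

/-- The relativistic velocity `v̂ = v / √(1+|v|²)`. -/
def vhat (v : E3) : E3 := (Real.sqrt (1 + ‖v‖ ^ 2))⁻¹ • v

/-- The standard orthonormal basis vectors `e₁, e₂, e₃` of `ℝ³`. -/
def stdB (i : Fin 3) : E3 := EuclideanSpace.single i (1 : ℝ)

/-- The cross product on `ℝ³`. -/
def cross3 (a b : E3) : E3 :=
  EuclideanSpace.single 0 (a 1 * b 2 - a 2 * b 1) +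
    EuclideanSpace.single 1 (a 2 * b 0 - a 0 * b 2) +
    EuclideanSpace.single 2 (a 0 * b 1 - a 1 * b 0)

/-! On the support of the cutoff, `t (|ξ| - μ v̂·ξ) ≤ 2¹²`. With `u = v/|v|` the resonance function
is `|ξ| - c ⟪u, ξ⟫` where `1 - |c| ≥ 1 - |v̂| ≥ (2 (1 + |v|)²)⁻¹`, and
`|ξ - ⟪u, ξ⟫ u|² ≤ 2 |ξ| (|ξ| - c ⟪u, ξ⟫)`. So, for `|ξ| ≤ L = 2^{k+2}`, the component of `ξ`
orthogonal to `u` is both `O(√(L/t))` and `O((1 + |v|)/t)`: the support lies in a cylinder of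
volume `O(L²/t)` around the axis `u`. The symbol `((e_j × v)·ξ)/|v|` only sees that orthogonal
component, so it is bounded by `L` and by `O((1 + |v|)/t)`, and both estimates follow by bounding
the integral by the supremum of the integrand times the volume of the cylinder. -/

section InnerProductSpace

variable {E : Type*} [NormedAddCommGroup E] [InnerProductSpace ℝ E]

lemma norm_sub_inner_smul_sq {u : E} (hu : ‖u‖ = 1) (ξ : E) :
    ‖ξ - ⟪u, ξ⟫ • u‖ ^ 2 = ‖ξ‖ ^ 2 - ⟪u, ξ⟫ ^ 2 := by
  rw [norm_sub_sq_real, norm_smul, hu, real_inner_smul_right, real_inner_comm, Real.norm_eq_abs,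
    mul_one, sq_abs]
  ring

lemma abs_real_inner_le_of_norm_eq_one {u : E} (hu : ‖u‖ = 1) (ξ : E) : |⟪u, ξ⟫| ≤ ‖ξ‖ := by
  simpa [hu] using abs_real_inner_le_norm u ξ

lemma abs_real_inner_le_norm_mul_norm_sub_inner_smul {u w : E} (hwu : ⟪w, u⟫ = 0) (ξ : E) :
    |⟪w, ξ⟫| ≤ ‖w‖ * ‖ξ - ⟪u, ξ⟫ • u‖ := by
  have : ⟪w, ξ⟫ = ⟪w, ξ - ⟪u, ξ⟫ • u⟫ := by
    rw [inner_sub_right, real_inner_smul_right, hwu, mul_zero, sub_zero]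
  exact this ▸ abs_real_inner_le_norm _ _

lemma norm_sub_inner_smul_sq_le {u : E} (hu : ‖u‖ = 1) {c : ℝ} (hc : |c| ≤ 1) (ξ : E) :
    ‖ξ - ⟪u, ξ⟫ • u‖ ^ 2 ≤ 2 * ‖ξ‖ * (‖ξ‖ - c * ⟪u, ξ⟫) := by
  have hp := abs_real_inner_le_of_norm_eq_one hu ξ
  have hcp : c * ⟪u, ξ⟫ ≤ |⟪u, ξ⟫| := by
    calc c * ⟪u, ξ⟫ ≤ |c| * |⟪u, ξ⟫| := by rw [← abs_mul]; exact le_abs_self _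
      _ ≤ |⟪u, ξ⟫| := mul_le_of_le_one_left (abs_nonneg _) hc
  rw [norm_sub_inner_smul_sq hu, ← sq_abs ⟪u, ξ⟫]
  nlinarith [abs_nonneg ⟪u, ξ⟫]

lemma one_sub_abs_mul_norm_le {u : E} (hu : ‖u‖ = 1) (c : ℝ) (ξ : E) :
    (1 - |c|) * ‖ξ‖ ≤ ‖ξ‖ - c * ⟪u, ξ⟫ := by
  have hp := abs_real_inner_le_of_norm_eq_one hu ξ
  have := (le_abs_self (c * ⟪u, ξ⟫)).trans_eq (abs_mul c _)
  nlinarith [mul_le_mul_of_nonneg_left hp (abs_nonneg c)]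

section Resonant

variable {u ξ : E} {c t A : ℝ}

lemma mul_norm_sub_inner_smul_sq_le (hu : ‖u‖ = 1) (hc : |c| ≤ 1) (ht : 0 < t)
    (hres : t * (‖ξ‖ - c * ⟪u, ξ⟫) ≤ A) : t * ‖ξ - ⟪u, ξ⟫ • u‖ ^ 2 ≤ 2 * A * ‖ξ‖ := by
  nlinarith [norm_sub_inner_smul_sq_le hu hc ξ, norm_nonneg ξ]

lemma one_sub_abs_mul_mul_norm_sub_inner_smul_sq_le (hu : ‖u‖ = 1) (hc : |c| ≤ 1) (ht : 0 < t)
    (hres : t * (‖ξ‖ - c * ⟪u, ξ⟫) ≤ A) :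
    (1 - |c|) * (t * ‖ξ - ⟪u, ξ⟫ • u‖) ^ 2 ≤ 2 * A ^ 2 := by
  have hlow := one_sub_abs_mul_norm_le hu c ξ
  have hΦ : 0 ≤ t * (‖ξ‖ - c * ⟪u, ξ⟫) :=
    mul_nonneg ht.le ((mul_nonneg (sub_nonneg.2 hc) (norm_nonneg ξ)).trans hlow)
  calc (1 - |c|) * (t * ‖ξ - ⟪u, ξ⟫ • u‖) ^ 2
      ≤ (1 - |c|) * t ^ 2 * (2 * ‖ξ‖ * (‖ξ‖ - c * ⟪u, ξ⟫)) := by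
        rw [mul_pow, ← mul_assoc]
        gcongr
        exact norm_sub_inner_smul_sq_le hu hc ξ
    _ = 2 * (t * ((1 - |c|) * ‖ξ‖)) * (t * (‖ξ‖ - c * ⟪u, ξ⟫)) := by ring
    _ ≤ 2 * (t * (‖ξ‖ - c * ⟪u, ξ⟫)) * (t * (‖ξ‖ - c * ⟪u, ξ⟫)) := by gcongr
    _ ≤ 2 * A ^ 2 := by nlinarith

end Resonant

lemma exists_orthonormalBasis_apply_zero_eq [FiniteDimensional ℝ E] {n : ℕ}
    (hE : Module.finrank ℝ E = n + 1) {u : E} (hu : ‖u‖ = 1) :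
    ∃ b : OrthonormalBasis (Fin (n + 1)) ℝ E, b 0 = u := by
  have hu' : Orthonormal ℝ (({0} : Set (Fin (n + 1))).domRestrict fun _ => u) := by
    rw [orthonormal_iff_ite]
    rintro ⟨i, rfl⟩ ⟨j, rfl⟩
    simp [Set.domRestrict, hu]
  obtain ⟨b, hb⟩ := hu'.exists_orthonormalBasis_extension_of_card_eq (by simpa using hE)
  exact ⟨b, hb 0 rfl⟩

def cylinderAlong (u : E) (h ρ : ℝ) : Set E := {ξ | |⟪u, ξ⟫| ≤ h ∧ ‖ξ - ⟪u, ξ⟫ • u‖ ≤ ρ}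

variable [FiniteDimensional ℝ E] [MeasurableSpace E] [BorelSpace E]

lemma OrthonormalBasis.volume_setOf_abs_inner_le {ι : Type*} [Fintype ι]
    (b : OrthonormalBasis ι ℝ E) (c : ι → ℝ) :
    volume {ξ : E | ∀ i, |⟪b i, ξ⟫| ≤ c i} = ∏ i, ENNReal.ofReal (2 * c i) := by
  have hbox : {ξ : E | ∀ i, |⟪b i, ξ⟫| ≤ c i} =
      b.repr ⁻¹' (WithLp.ofLp ⁻¹' Set.univ.pi fun i => Set.Icc (-c i) (c i)) := by
    ext ξ
    simp only [Set.mem_ofPred_eq, Set.mem_preimage, Set.mem_univ_pi, Set.mem_Icc, abs_le,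
      b.repr_apply_apply]
  have hpi : MeasurableSet (Set.univ.pi fun i => Set.Icc (-c i) (c i)) :=
    .univ_pi fun _ => measurableSet_Icc
  rw [hbox, b.measurePreserving_repr.measure_preimage
      ((PiLp.volume_preserving_ofLp ι).measurable hpi).nullMeasurableSet,
    (PiLp.volume_preserving_ofLp ι).measure_preimage hpi.nullMeasurableSet, volume_pi_pi]
  simp [Real.volume_Icc, two_mul]

lemma volume_cylinderAlong_le {n : ℕ} (hE : Module.finrank ℝ E = n + 1) {u : E} (hu : ‖u‖ = 1)
    (h ρ : ℝ) :
    volume (cylinderAlong u h ρ) ≤ ENNReal.ofReal (2 * h) * ENNReal.ofReal (2 * ρ) ^ n := by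
  obtain ⟨b, rfl⟩ := exists_orthonormalBasis_apply_zero_eq hE hu
  calc volume (cylinderAlong (b 0) h ρ)
      ≤ volume {ξ : E | ∀ i, |⟪b i, ξ⟫| ≤ (Fin.cons h fun _ => ρ : Fin (n + 1) → ℝ) i} := by
        refine measure_mono fun ξ ⟨hξh, hξρ⟩ i => ?_
        induction i using Fin.cases with
        | zero => exact hξh
        | succ i =>
          have hb : ⟪b i.succ, b 0⟫ = 0 := b.orthonormal.2 (Fin.succ_ne_zero i)
          have hξ := abs_real_inner_le_norm_mul_norm_sub_inner_smul hb ξ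
          rw [b.orthonormal.1, one_mul] at hξ
          simpa using hξ.trans hξρ
    _ = ENNReal.ofReal (2 * h) * ENNReal.ofReal (2 * ρ) ^ n := by
        rw [b.volume_setOf_abs_inner_le, Fin.prod_univ_succ]
        simp

end InnerProductSpace

lemma norm_setIntegral_le_of_forall_ne_zero {α F : Type*} [MeasurableSpace α]
    [NormedAddCommGroup F] [NormedSpace ℝ F] {μ : Measure α} {f : α → F} {s t : Set α} {C : ℝ}
    (hs : MeasurableSet s) (ht : μ t < ⊤) (hC : 0 ≤ C)
    (hf : ∀ x ∈ s, f x ≠ 0 → x ∈ t ∧ ‖f x‖ ≤ C) :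
    ‖∫ x in s, f x ∂μ‖ ≤ C * μ.real t := by
  have hst : ∫ x in s, f x ∂μ = ∫ x in s ∩ t, f x ∂μ :=
    setIntegral_eq_of_subset_of_forall_sdiff_eq_zero hs Set.inter_subset_left
      fun x ⟨hxs, hxt⟩ => by_contra fun hx => hxt ⟨hxs, (hf x hxs hx).1⟩
  have hbound : ∀ x ∈ s ∩ t, ‖f x‖ ≤ C := fun x ⟨hxs, _⟩ => by
    by_cases hx : f x = 0
    · simpa [hx] using hC
    · exact (hf x hxs hx).2
  rw [hst]
  calc ‖∫ x in s ∩ t, f x ∂μ‖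
      ≤ C * μ.real (s ∩ t) := norm_setIntegral_le_of_norm_le_const
        ((measure_mono Set.inter_subset_right).trans_lt ht) hbound
    _ ≤ C * μ.real t := by gcongr; exacts [ht.ne, Set.inter_subset_right]

lemma norm_setIntegral_le_of_resonant {E F : Type*} [NormedAddCommGroup E] [InnerProductSpace ℝ E]
    [FiniteDimensional ℝ E] [MeasurableSpace E] [BorelSpace E] [NormedAddCommGroup F]
    [NormedSpace ℝ F] {n : ℕ} (hE : Module.finrank ℝ E = n + 1) {u : E} (hu : ‖u‖ = 1)
    {c t A L M : ℝ} (hc : |c| ≤ 1) (ht : 0 < t) (hA : 0 ≤ A) (hL : 0 ≤ L) (hM : 0 ≤ M)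
    {S : Set E} (hS : MeasurableSet S) {f : E → F}
    (hf : ∀ ξ ∈ S, f ξ ≠ 0 → ‖ξ‖ ≤ L ∧ t * (‖ξ‖ - c * ⟪u, ξ⟫) ≤ A ∧ ‖f ξ‖ ≤ M) :
    ‖∫ ξ in S, f ξ‖ ≤ M * (2 * L * (2 * √(2 * A * L / t)) ^ n) := by
  have hvol := volume_cylinderAlong_le hE hu L √(2 * A * L / t)
  refine (norm_setIntegral_le_of_forall_ne_zero hS (hvol.trans_lt (by finiteness)) hM
    fun ξ hξS hξ => ?_).trans ?_
  · obtain ⟨hξL, hres, hfξ⟩ := hf ξ hξS hξ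
    refine ⟨⟨(abs_real_inner_le_of_norm_eq_one hu ξ).trans hξL, ?_⟩, hfξ⟩
    rw [Real.le_sqrt (norm_nonneg _) (by positivity), le_div_iff₀ ht, mul_comm]
    exact (mul_norm_sub_inner_smul_sq_le hu hc ht hres).trans (by gcongr)
  · gcongr
    refine (ENNReal.toReal_mono (by finiteness) hvol).trans_eq ?_
    simp [ENNReal.toReal_ofReal, hL]

lemma norm_vhat (v : E3) : ‖vhat v‖ = ‖v‖ / √(1 + ‖v‖ ^ 2) := by
  rw [vhat, norm_smul, norm_inv, Real.norm_of_nonneg (Real.sqrt_nonneg _), inv_mul_eq_div]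

lemma inner_vhat {v : E3} (hv : v ≠ 0) (ξ : E3) :
    ⟪vhat v, ξ⟫ = ‖vhat v‖ * ⟪‖v‖⁻¹ • v, ξ⟫ := by
  rw [norm_vhat, vhat, real_inner_smul_left, real_inner_smul_left]
  field_simp [norm_ne_zero_iff.2 hv]

lemma inv_le_one_sub_norm_vhat (v : E3) : (2 * (1 + ‖v‖) ^ 2)⁻¹ ≤ 1 - ‖vhat v‖ := by
  rw [norm_vhat]
  set n := ‖v‖
  set q := √(1 + n ^ 2)
  have hn : 0 ≤ n := norm_nonneg v
  have hq : q ^ 2 = 1 + n ^ 2 := Real.sq_sqrt (by positivity)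
  have hq0 : 0 ≤ q := Real.sqrt_nonneg _
  have hnq : n < q := by nlinarith
  have hq1 : q ≤ 1 + n := by nlinarith
  -- `1 - n / q = 1 / (q (q + n))` and `q (q + n) ≤ 2 (1 + n)²`
  have hK : q * (q + n) ≤ 2 * (1 + n) ^ 2 := by nlinarith
  rw [one_sub_div (by positivity), inv_le_iff_one_le_mul₀ (by positivity), div_mul_eq_mul_div,
    le_div_iff₀ (by positivity)]
  nlinarith [mul_le_mul_of_nonneg_left hK (sub_nonneg.2 hnq.le)]

lemma inner_eq_sum_three (x y : E3) : ⟪x, y⟫ = x 0 * y 0 + x 1 * y 1 + x 2 * y 2 := by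
  simp [PiLp.inner_apply, Fin.sum_univ_three, mul_comm]

lemma cross3_apply_zero (a b : E3) : cross3 a b 0 = a 1 * b 2 - a 2 * b 1 := by
  simp [cross3]

lemma cross3_apply_one (a b : E3) : cross3 a b 1 = a 2 * b 0 - a 0 * b 2 := by
  simp [cross3]

lemma cross3_apply_two (a b : E3) : cross3 a b 2 = a 0 * b 1 - a 1 * b 0 := by
  simp [cross3]

lemma inner_cross3_self (a b : E3) : ⟪cross3 a b, b⟫ = 0 := by
  rw [inner_eq_sum_three, cross3_apply_zero, cross3_apply_one, cross3_apply_two]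
  ring

lemma norm_cross3_le (a b : E3) : ‖cross3 a b‖ ≤ ‖a‖ * ‖b‖ := by
  have h : ‖cross3 a b‖ ^ 2 ≤ (‖a‖ * ‖b‖) ^ 2 := by
    rw [mul_pow, ← real_inner_self_eq_norm_sq, ← real_inner_self_eq_norm_sq,
      ← real_inner_self_eq_norm_sq]
    simp only [inner_eq_sum_three, cross3_apply_zero, cross3_apply_one, cross3_apply_two]
    nlinarith [sq_nonneg (a 0 * b 0 + a 1 * b 1 + a 2 * b 2)]
  exact (sq_le_sq₀ (norm_nonneg _) (by positivity)).1 h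

lemma norm_stdB (i : Fin 3) : ‖stdB i‖ = 1 := by simp [stdB]

lemma exists_mul_inner_vhat_eq {μ : ℝ} (hμ : |μ| ≤ 1) {v : E3} (hv : v ≠ 0) :
    ∃ c : ℝ, |c| ≤ 1 ∧ (2 * (1 + ‖v‖) ^ 2)⁻¹ ≤ 1 - |c| ∧
      ∀ ξ, μ * ⟪vhat v, ξ⟫ = c * ⟪‖v‖⁻¹ • v, ξ⟫ := by
  have hδ : (2 * (1 + ‖v‖) ^ 2)⁻¹ ≤ 1 - |μ * ‖vhat v‖| := by
    refine (inv_le_one_sub_norm_vhat v).trans ?_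
    rw [abs_mul, abs_norm]
    nlinarith [norm_nonneg (vhat v)]
  refine ⟨μ * ‖vhat v‖, ?_, hδ, fun ξ => ?_⟩
  · linarith [inv_pos.2 (by positivity : 0 < 2 * (1 + ‖v‖) ^ 2)]
  · rw [inner_vhat hv]
    ring

lemma norm_setIntegral_le_of_vhat_resonant {F : Type*} [NormedAddCommGroup F] [NormedSpace ℝ F]
    {μ t A L M : ℝ} (hμ : |μ| ≤ 1) (ht : 0 < t) (hA : 0 ≤ A) (hL : 0 ≤ L) (hM : 0 ≤ M) {v : E3}
    (hv : v ≠ 0) {S : Set E3} (hS : MeasurableSet S) {f : E3 → F}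
    (hf : ∀ ξ ∈ S, f ξ ≠ 0 → ‖ξ‖ ≤ L ∧ t * (‖ξ‖ - μ * ⟪vhat v, ξ⟫) ≤ A ∧ ‖f ξ‖ ≤ M) :
    ‖∫ ξ in S, f ξ‖ ≤ M * (16 * A * L ^ 2 / t) := by
  obtain ⟨c, hc1, -, hc⟩ := exists_mul_inner_vhat_eq hμ hv
  refine (norm_setIntegral_le_of_resonant (n := 2) finrank_euclideanSpace_fin
    (norm_smul_inv_norm hv) hc1 ht hA hL hM hS fun ξ hξS hξ => hc ξ ▸ hf ξ hξS hξ).trans_eq ?_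
  rw [mul_pow, Real.sq_sqrt (by positivity)]
  ring

lemma abs_inner_div_norm_le_of_vhat_resonant {μ t A : ℝ} (hμ : |μ| ≤ 1) (ht : 0 < t) (hA : 0 ≤ A)
    {v w ξ : E3} (hv : v ≠ 0) (hwv : ⟪w, v⟫ = 0) (hw : ‖w‖ ≤ ‖v‖)
    (hres : t * (‖ξ‖ - μ * ⟪vhat v, ξ⟫) ≤ A) :
    |⟪w, ξ⟫| / ‖v‖ ≤ 2 * (1 + ‖v‖) * A / t := by
  obtain ⟨c, hc1, hδ, hc⟩ := exists_mul_inner_vhat_eq hμ hv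
  rw [hc] at hres
  set u : E3 := ‖v‖⁻¹ • v
  have hu : ‖u‖ = 1 := norm_smul_inv_norm hv
  have hwu : ⟪w, u⟫ = 0 := by simp [u, real_inner_smul_right, hwv]
  set P := ‖ξ - ⟪u, ξ⟫ • u‖
  have hsq : (t * P) ^ 2 ≤ (2 * (1 + ‖v‖) * A) ^ 2 := by
    calc (t * P) ^ 2 = 2 * (1 + ‖v‖) ^ 2 * ((2 * (1 + ‖v‖) ^ 2)⁻¹ * (t * P) ^ 2) := by
          field_simp
      _ ≤ 2 * (1 + ‖v‖) ^ 2 * ((1 - |c|) * (t * P) ^ 2) := by gcongr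
      _ ≤ 2 * (1 + ‖v‖) ^ 2 * (2 * A ^ 2) := by
          gcongr 2 * (1 + ‖v‖) ^ 2 * ?_
          exact one_sub_abs_mul_mul_norm_sub_inner_smul_sq_le hu hc1 ht hres
      _ = (2 * (1 + ‖v‖) * A) ^ 2 := by ring
  have htP : t * P ≤ 2 * (1 + ‖v‖) * A := (sq_le_sq₀ (by positivity) (by positivity)).1 hsq
  have hn : 0 < ‖v‖ := norm_pos_iff.2 hv
  rw [div_le_iff₀ hn, div_mul_eq_mul_div, le_div_iff₀ ht]
  calc |⟪w, ξ⟫| * t ≤ ‖v‖ * P * t := by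
        gcongr
        exact (abs_real_inner_le_norm_mul_norm_sub_inner_smul hwu ξ).trans (by gcongr)
    _ = t * P * ‖v‖ := by ring
    _ ≤ 2 * (1 + ‖v‖) * A * ‖v‖ := by gcongr

lemma norm_setIntegral_orthogonal_symbol_le {μ t A L M : ℝ} (hμ : |μ| ≤ 1) (ht : 0 < t)
    (hA : 0 ≤ A) (hL : 0 ≤ L) (hM : 0 ≤ M) {v w : E3} (hv : v ≠ 0) (hwv : ⟪w, v⟫ = 0)
    (hw : ‖w‖ ≤ ‖v‖) {S : Set E3} (hS : MeasurableSet S) (hSL : ∀ ξ ∈ S, ‖ξ‖ ≤ L) {G : E3 → ℂ}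
    (hG : ∀ ξ ∈ S, ‖G ξ‖ ≤ M) {χ : ℝ → ℝ} (hχ1 : ∀ r, |χ r| ≤ 1)
    (hχ0 : ∀ r, A ≤ |r| → χ r = 0) {f : E3 → ℂ}
    (hf : ∀ ξ, ‖f ξ‖ ≤ |⟪w, ξ⟫| / ‖v‖ * ‖G ξ‖ * |χ (t * (‖ξ‖ - μ * ⟪vhat v, ξ⟫))|) :
    ‖∫ ξ in S, f ξ‖ ≤ 16 * A * L ^ 3 / t * M ∧
      (1 + ‖v‖)⁻¹ * ‖∫ ξ in S, f ξ‖ ≤ 32 * A ^ 2 * L ^ 2 / t ^ 2 * M := by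
  have hsupp : ∀ ξ, f ξ ≠ 0 → t * (‖ξ‖ - μ * ⟪vhat v, ξ⟫) ≤ A := fun ξ hξ => by
    by_contra! hlt
    refine hξ (norm_le_zero_iff.1 ((hf ξ).trans_eq ?_))
    rw [hχ0 _ (hlt.le.trans (le_abs_self _)), abs_zero, mul_zero]
  have key : ∀ B, 0 ≤ B →
      (∀ ξ ∈ S, t * (‖ξ‖ - μ * ⟪vhat v, ξ⟫) ≤ A → |⟪w, ξ⟫| / ‖v‖ ≤ B) →
      ‖∫ ξ in S, f ξ‖ ≤ B * M * (16 * A * L ^ 2 / t) := fun B hB hsymb =>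
    norm_setIntegral_le_of_vhat_resonant hμ ht hA hL (by positivity) hv hS fun ξ hξS hξ =>
      ⟨hSL ξ hξS, hsupp ξ hξ, (hf ξ).trans <| by
        simpa using mul_le_mul (mul_le_mul (hsymb ξ hξS (hsupp ξ hξ)) (hG ξ hξS) (norm_nonneg _) hB)
          (hχ1 _) (abs_nonneg _) (by positivity)⟩
  have hn : 0 < ‖v‖ := norm_pos_iff.2 hv
  constructor
  · refine (key L hL fun ξ hξS _ => ?_).trans_eq (by ring)
    rw [div_le_iff₀ hn]
    calc |⟪w, ξ⟫| ≤ ‖w‖ * ‖ξ‖ := abs_real_inner_le_norm w ξ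
      _ ≤ ‖v‖ * L := mul_le_mul hw (hSL ξ hξS) (norm_nonneg _) hn.le
      _ = L * ‖v‖ := mul_comm _ _
  · rw [inv_mul_le_iff₀ (by positivity)]
    exact (key _ (by positivity) fun ξ _ hres =>
      abs_inner_div_norm_le_of_vhat_resonant hμ ht hA hv hwv hw hres).trans_eq
      (by field_simp; ring)

/-- Gain of negative powers of `t` from the smallness of the time-resonance set
(estimates (7.71)–(7.72) of the paper). -/
theorem stmt17 :
    ∃ C : ℝ, 0 < C ∧
      ∀ μ : ℝ, (μ = 1 ∨ μ = -1) → ∀ (j : Fin 3) (k : ℤ) (t : ℝ), 0 < t →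
        ∀ x v : E3, v ≠ 0 → ∀ G : E3 → ℂ, Measurable G → ∀ MG : ℝ,
          (∀ ξ : E3, (2 : ℝ) ^ (k - 2) ≤ ‖ξ‖ → ‖ξ‖ ≤ (2 : ℝ) ^ (k + 2) → ‖G ξ‖ ≤ MG) →
          ∀ χ : ℝ → ℝ, Measurable χ → (∀ r : ℝ, |χ r| ≤ 1) →
            (∀ r : ℝ, (2 : ℝ) ^ (12 : ℕ) ≤ |r| → χ r = 0) →
            ‖∫ ξ in {ξ : E3 | (2 : ℝ) ^ (k - 2) ≤ ‖ξ‖ ∧ ‖ξ‖ ≤ (2 : ℝ) ^ (k + 2)},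
                Complex.exp (Complex.I * ((⟪x + t • vhat v, ξ⟫ - t * μ * ‖ξ‖ : ℝ) : ℂ)) *
                  ((⟪cross3 (stdB j) v, ξ⟫ / ‖v‖ : ℝ) : ℂ) *
                  G ξ * ((χ (t * (‖ξ‖ - μ * ⟪vhat v, ξ⟫)) : ℝ) : ℂ)‖ ≤
              C * t⁻¹ * (2 : ℝ) ^ (3 * k) * MG ∧
            (1 + ‖v‖)⁻¹ *
              ‖∫ ξ in {ξ : E3 | (2 : ℝ) ^ (k - 2) ≤ ‖ξ‖ ∧ ‖ξ‖ ≤ (2 : ℝ) ^ (k + 2)},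
                Complex.exp (Complex.I * ((⟪x + t • vhat v, ξ⟫ - t * μ * ‖ξ‖ : ℝ) : ℂ)) *
                  ((⟪cross3 (stdB j) v, ξ⟫ / ‖v‖ : ℝ) : ℂ) *
                  G ξ * ((χ (t * (‖ξ‖ - μ * ⟪vhat v, ξ⟫)) : ℝ) : ℂ)‖ ≤
              C * (t ^ 2)⁻¹ * (2 : ℝ) ^ (2 * k) * MG := by
  refine ⟨2 ^ 33, by norm_num, fun μ hμ j k t ht x v hv G _ MG hG χ _ hχ1 hχ0 => ?_⟩
  have hμ' : |μ| ≤ 1 := by rcases hμ with rfl | rfl <;> norm_num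
  have hnorm : ‖(2 : ℝ) ^ k • stdB 0‖ = 2 ^ k := by simp [norm_smul, norm_stdB]
  have hMG : 0 ≤ MG := (norm_nonneg _).trans <| hG ((2 : ℝ) ^ k • stdB 0)
    (by rw [hnorm]; exact zpow_le_zpow_right₀ one_le_two (by omega))
    (by rw [hnorm]; exact zpow_le_zpow_right₀ one_le_two (by omega))
  have hannulus : MeasurableSet {ξ : E3 | (2 : ℝ) ^ (k - 2) ≤ ‖ξ‖ ∧ ‖ξ‖ ≤ (2 : ℝ) ^ (k + 2)} :=
    (measurableSet_le measurable_const measurable_norm).inter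
      (measurableSet_le measurable_norm measurable_const)
  have hL : (2 : ℝ) ^ (k + 2) = 2 ^ k * 4 := by rw [zpow_add₀ two_ne_zero]; norm_num
  have h3k : (2 : ℝ) ^ (3 * k) = (2 ^ k) ^ 3 := by rw [mul_comm, zpow_mul]; norm_cast
  have h2k : (2 : ℝ) ^ (2 * k) = (2 ^ k) ^ 2 := by rw [mul_comm, zpow_mul]; norm_cast
  refine (norm_setIntegral_orthogonal_symbol_le (A := 2 ^ 12) (L := 2 ^ (k + 2)) hμ' ht
    (by positivity) (by positivity) hMG hv (inner_cross3_self _ _)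
    (by simpa [norm_stdB] using norm_cross3_le (stdB j) v) hannulus (fun _ hξ => hξ.2)
    (fun ξ hξ => hG ξ hξ.1 hξ.2) hχ1 hχ0 fun ξ => ?_).imp (·.trans ?_) (·.trans_eq ?_)
  · simp only [norm_mul, Complex.norm_exp_I_mul_ofReal, Complex.norm_real, Real.norm_eq_abs,
      abs_div, abs_norm, one_mul, le_refl]
  · calc _ = 2 ^ 22 * t⁻¹ * 2 ^ (3 * k) * MG := by rw [hL, h3k]; ring
      _ ≤ 2 ^ 33 * t⁻¹ * 2 ^ (3 * k) * MG := by gcongr <;> norm_num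
  · rw [hL, h2k]; ring
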